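/- arXiv:1905.09301 — 2 statements merged into one kernel-verified Lean document; each statement's English description precedes it below -/
import Mathlib

section
/- Suppose the index set T of 𝒫 = {P_t : t ∈ T} is a compact subset of ℝ^m, T_o is an open set containing T, and f_{T_o} : ℝ × T_o → ℝ is a Borel measurable map with f_{T_o}(·, t) = f_t for every t ∈ T (so that E^{P_t}(f) = E^P(f_{T_o}(·, t)) for all t ∈ T) which is continuously differentiable in both arguments (x, t) on all of ℝ × T_o. If moreover E^P(sup_{t∈T} |f_t|) < +∞, then Ê̲_n^𝒫(f) is a strongly consistent estimator of E̲^𝒫(f). -/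
open MeasureTheory Filter Topology ProbabilityTheory
open scoped ENNReal

noncomputable section

/-!
The upper bound is the strong law of large numbers at a single near-optimal parameter. For the
lower bound, dominated convergence (with the integrable envelope `sup_t |f_t|`) shows that the
lower envelope `x ↦ inf_{s ∈ U} f_s(x)` over a small enough neighbourhood `U` of a parameter `t`
has mean arbitrarily close to `E^P(f_t)`; by compactness finitely many such neighbourhoods cover
`T`, and the strong law applied to their finitely many lower envelopes bounds the empirical
infimum from below. Continuity in `t` also makes the empirical infimum an infimum over a countable
dense set of parameters, hence measurable, so it is its own minimal measurable cover.
-/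

def epos (x : EReal) : ℝ≥0∞ := if x = ⊤ then ⊤ else ENNReal.ofReal x.toReal

def eExp {Ω : Type*} [MeasurableSpace Ω] (μ : Measure Ω) (g : Ω → EReal) : EReal :=
  ((∫⁻ ω, epos (g ω) ∂μ : ℝ≥0∞) : EReal) - ((∫⁻ ω, epos (-(g ω)) ∂μ : ℝ≥0∞) : EReal)

def eExpExists {Ω : Type*} [MeasurableSpace Ω] (μ : Measure Ω) (g : Ω → EReal) : Prop :=
  (∫⁻ ω, epos (g ω) ∂μ) ≠ ⊤ ∨ (∫⁻ ω, epos (-(g ω)) ∂μ) ≠ ⊤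

def outerExp {Ω : Type*} [MeasurableSpace Ω] (μ : Measure Ω) (h : Ω → EReal) : EReal :=
  sInf {y : EReal | ∃ g : Ω → EReal,
    Measurable g ∧ (∀ ω, h ω ≤ g ω) ∧ eExpExists μ g ∧ eExp μ g = y}

def innerExp {Ω : Type*} [MeasurableSpace Ω] (μ : Measure Ω) (h : Ω → EReal) : EReal :=
  - outerExp μ (fun ω => - h ω)

def IsMinMeasCover {Ω : Type*} [MeasurableSpace Ω] (μ : Measure Ω) (h g : Ω → EReal) : Prop :=
  Measurable g ∧ (∀ ω, h ω ≤ g ω) ∧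
    ∀ g' : Ω → EReal, Measurable g' → (∀ ω, h ω ≤ g' ω) → ∀ᵐ ω ∂μ, g ω ≤ g' ω

def eabs (x : EReal) : EReal := max x (-x)

lemma eabs_coe (r : ℝ) : eabs (r : EReal) = ((|r| : ℝ) : EReal) := by
  rw [eabs, abs_eq_max_neg, ← EReal.coe_neg, EReal.coe_strictMono.monotone.map_max]

lemma EReal.coe_ciInf {ι : Sort*} [Nonempty ι] {u : ι → ℝ} (hu : BddBelow (Set.range u)) :
    ((⨅ i, u i : ℝ) : EReal) = ⨅ i, (u i : EReal) :=
  Monotone.map_ciInf_of_continuousAt continuous_coe_real_ereal.continuousAt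
    EReal.coe_strictMono.monotone hu

lemma isMinMeasCover_self {Ω : Type*} [MeasurableSpace Ω] {μ : Measure Ω} {h : Ω → EReal}
    (hh : Measurable h) : IsMinMeasCover μ h h :=
  ⟨hh, fun _ => le_rfl, fun _ _ hle => ae_of_all _ hle⟩

lemma measurable_iInf_of_continuous {α K : Type*} [MeasurableSpace α] [TopologicalSpace K]
    [TopologicalSpace.SeparableSpace K] {F : K → α → ℝ} (hFm : ∀ t, Measurable (F t))
    (hFc : ∀ x, Continuous fun t => F t x) : Measurable fun x => ⨅ t, F t x := by
  obtain ⟨D, hDc, hDd⟩ := TopologicalSpace.exists_countable_dense K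
  have : Countable D := hDc.to_subtype
  simp_rw [← hDd.ciInf' (hFc _)]
  exact Measurable.iInf fun t => hFm t

lemma ae_tendsto_of_ae_eventually_bounds {Ω : Type*} [MeasurableSpace Ω] {μ : Measure Ω}
    {u : ℕ → Ω → ℝ} {L : ℝ}
    (hlo : ∀ c < L, ∀ᵐ ω ∂μ, ∀ᶠ n in atTop, c ≤ u n ω)
    (hhi : ∀ c > L, ∀ᵐ ω ∂μ, ∀ᶠ n in atTop, u n ω ≤ c) :
    ∀ᵐ ω ∂μ, Tendsto (u · ω) atTop (𝓝 L) := by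
  have hlo' : ∀ q : ℚ, ∀ᵐ ω ∂μ, (q : ℝ) < L → ∀ᶠ n in atTop, (q : ℝ) ≤ u n ω := fun q => by
    by_cases hq : (q : ℝ) < L
    · filter_upwards [hlo q hq] with ω hω _ using hω
    · exact ae_of_all _ fun _ h => (hq h).elim
  have hhi' : ∀ q : ℚ, ∀ᵐ ω ∂μ, L < q → ∀ᶠ n in atTop, u n ω ≤ q := fun q => by
    by_cases hq : L < (q : ℝ)
    · filter_upwards [hhi q hq] with ω hω _ using hω
    · exact ae_of_all _ fun _ h => (hq h).elim
  filter_upwards [ae_all_iff.2 hlo', ae_all_iff.2 hhi'] with ω hωlo hωhi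
  refine tendsto_order.2 ⟨fun a ha => ?_, fun a ha => ?_⟩
  · obtain ⟨q, haq, hqL⟩ := exists_rat_btwn ha
    exact (hωlo q hqL).mono fun n hn => haq.trans_le hn
  · obtain ⟨q, hLq, hqa⟩ := exists_rat_btwn ha
    exact (hωhi q hLq).mono fun n hn => hn.trans_lt hqa

lemma eabs_iInf_coe_sub_iInf_coe {ι κ : Sort*} [Nonempty ι] [Nonempty κ] {u : ι → ℝ}
    {v : κ → ℝ} (hu : BddBelow (Set.range u)) (hv : BddBelow (Set.range v)) :
    eabs ((⨅ i, (u i : EReal)) - ⨅ j, (v j : EReal)) = ((|(⨅ i, u i) - ⨅ j, v j| : ℝ) : EReal) := by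
  rw [← EReal.coe_ciInf hu, ← EReal.coe_ciInf hv, ← EReal.coe_sub, eabs_coe]

def empiricalMean {α : Type*} (g : α → ℝ) (x : ℕ → α) (n : ℕ) : ℝ :=
  (n : ℝ)⁻¹ * ∑ k ∈ Finset.range n, g (x k)

lemma empiricalMean_mono {α : Type*} {g h : α → ℝ} (hgh : ∀ y, g y ≤ h y) (x : ℕ → α) (n : ℕ) :
    empiricalMean g x n ≤ empiricalMean h x n :=
  mul_le_mul_of_nonneg_left (Finset.sum_le_sum fun k _ => hgh (x k)) (by positivity)

lemma bddBelow_range_empiricalMean {α K : Type*} {F : K → α → ℝ} {env : α → ℝ}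
    (hFenv : ∀ t x, |F t x| ≤ env x) (x : ℕ → α) (n : ℕ) :
    BddBelow (Set.range fun t => empiricalMean (F t) x n) :=
  ⟨empiricalMean (fun y => -env y) x n, by
    rintro _ ⟨t, rfl⟩
    exact empiricalMean_mono (fun y => neg_le_of_abs_le (hFenv t y)) x n⟩

lemma ae_tendsto_empiricalMean {Ω α : Type*} [MeasurableSpace Ω] [MeasurableSpace α]
    {μ : Measure Ω} {P : Measure α} {X : ℕ → Ω → α} (hX : ∀ k, Measurable (X k))
    (hlaw : ∀ k, μ.map (X k) = P)
    (hindep : Pairwise fun i j => IndepFun (X i) (X j) μ) {g : α → ℝ} (hg : Measurable g)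
    (hgi : Integrable g P) :
    ∀ᵐ ω ∂μ, Tendsto (empiricalMean g (X · ω)) atTop (𝓝 (∫ x, g x ∂P)) := by
  have hident : ∀ k, IdentDistrib (g ∘ X k) (g ∘ X 0) μ μ := fun k =>
    (IdentDistrib.mk (hX k).aemeasurable (hX 0).aemeasurable (by rw [hlaw, hlaw])).comp hg
  have hint : Integrable (g ∘ X 0) μ := by
    rw [← hlaw 0] at hgi
    exact hgi.comp_measurable (hX 0)
  have hmean : μ[g ∘ X 0] = ∫ x, g x ∂P := by
    rw [← hlaw 0, integral_map (hX 0).aemeasurable hg.aestronglyMeasurable]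
    rfl
  filter_upwards [strong_law_ae_real (fun k => g ∘ X k) hint
    (fun i j hij => (hindep hij).comp hg hg) hident] with ω hω
  simp only [div_eq_inv_mul, hmean] at hω
  exact hω

def lowerEnvelope {K α : Type*} (F : K → α → ℝ) (U : Set K) (x : α) : ℝ :=
  ⨅ s : U, F s x

section Envelope

variable {α K : Type*} {F : K → α → ℝ} {env : α → ℝ}

lemma bddBelow_range_of_abs_le (hFenv : ∀ t x, |F t x| ≤ env x) (U : Set K) (x : α) :
    BddBelow (Set.range fun s : U => F s x) :=
  ⟨-env x, by rintro _ ⟨s, rfl⟩; exact neg_le_of_abs_le (hFenv s x)⟩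

lemma lowerEnvelope_le (hFenv : ∀ t x, |F t x| ≤ env x) {U : Set K} {s : K} (hs : s ∈ U)
    (x : α) : lowerEnvelope F U x ≤ F s x :=
  ciInf_le (bddBelow_range_of_abs_le hFenv U x) ⟨s, hs⟩

lemma abs_lowerEnvelope_le (hFenv : ∀ t x, |F t x| ≤ env x) {U : Set K} (hU : U.Nonempty)
    (x : α) : |lowerEnvelope F U x| ≤ env x := by
  obtain ⟨s, hs⟩ := hU
  have : Nonempty U := ⟨⟨s, hs⟩⟩
  refine abs_le.2 ⟨le_ciInf fun r => (abs_le.1 (hFenv r x)).1, ?_⟩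
  exact (lowerEnvelope_le hFenv hs x).trans (abs_le.1 (hFenv s x)).2

lemma measurable_lowerEnvelope [MeasurableSpace α] [TopologicalSpace K]
    [SecondCountableTopology K] (hFm : ∀ t, Measurable (F t))
    (hFc : ∀ x, Continuous fun t => F t x) (U : Set K) : Measurable (lowerEnvelope F U) :=
  measurable_iInf_of_continuous (fun s => hFm s) fun x => (hFc x).comp continuous_subtype_val

lemma tendsto_lowerEnvelope [TopologicalSpace K] (hFenv : ∀ t x, |F t x| ≤ env x)
    (hFc : ∀ x, Continuous fun t => F t x) {t : K} {V : ℕ → Set K}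
    (hV : (𝓝 t).HasAntitoneBasis V) (x : α) :
    Tendsto (fun k => lowerEnvelope F (V k) x) atTop (𝓝 (F t x)) := by
  have ht : ∀ k, t ∈ V k := fun k => mem_of_mem_nhds (hV.mem k)
  refine tendsto_order.2 ⟨fun a ha => ?_, fun a ha =>
    Eventually.of_forall fun k => (lowerEnvelope_le hFenv (ht k) x).trans_lt ha⟩
  obtain ⟨b, hab, hbt⟩ := exists_between ha
  have hnhds : {s | b < F s x} ∈ 𝓝 t := (isOpen_lt continuous_const (hFc x)).mem_nhds hbt
  filter_upwards [hV.tendsto_smallSets.eventually (eventually_smallSets_subset.2 hnhds)] with k hk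
  have : Nonempty (V k) := ⟨⟨t, ht k⟩⟩
  exact hab.trans_le (le_ciInf fun s => (hk s.2).le)

lemma exists_nhds_lt_integral_lowerEnvelope [MeasurableSpace α] [TopologicalSpace K]
    [SecondCountableTopology K] {P : Measure α} (henv : Integrable env P)
    (hFm : ∀ t, Measurable (F t)) (hFc : ∀ x, Continuous fun t => F t x)
    (hFenv : ∀ t x, |F t x| ≤ env x) (t : K) {c : ℝ} (hc : c < ∫ x, F t x ∂P) :
    ∃ U ∈ 𝓝 t, c < ∫ x, lowerEnvelope F U x ∂P := by
  obtain ⟨V, hV⟩ := (𝓝 t).exists_antitone_basis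
  have hlim : Tendsto (fun k => ∫ x, lowerEnvelope F (V k) x ∂P) atTop (𝓝 (∫ x, F t x ∂P)) :=
    tendsto_integral_of_dominated_convergence env
      (fun k => (measurable_lowerEnvelope hFm hFc _).aestronglyMeasurable) henv
      (fun k => ae_of_all _ (abs_lowerEnvelope_le hFenv (nonempty_of_mem (hV.mem k))))
      (ae_of_all _ (tendsto_lowerEnvelope hFenv hFc hV))
  obtain ⟨k, hk⟩ := (hlim.eventually_const_lt hc).exists
  exact ⟨V k, hV.mem k, hk⟩

end Envelope

section UniformStrongLaw

variable {Ω α K : Type*} [MeasurableSpace Ω] [MeasurableSpace α]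
  {μ : Measure Ω} {P : Measure α} {X : ℕ → Ω → α} {F : K → α → ℝ} {env : α → ℝ}

lemma bddBelow_range_integral (henv : Integrable env P) (hFm : ∀ t, Measurable (F t))
    (hFenv : ∀ t x, |F t x| ≤ env x) : BddBelow (Set.range fun t => ∫ x, F t x ∂P) := by
  refine ⟨-∫ x, env x ∂P, ?_⟩
  rintro _ ⟨t, rfl⟩
  rw [← integral_neg]
  exact integral_mono henv.neg (henv.mono' (hFm t).aestronglyMeasurable (ae_of_all _ (hFenv t)))
    fun x => neg_le_of_abs_le (hFenv t x)

lemma measurable_iInf_empiricalMean [TopologicalSpace K] [TopologicalSpace.SeparableSpace K]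
    (hX : ∀ k, Measurable (X k)) (hFm : ∀ t, Measurable (F t))
    (hFc : ∀ x, Continuous fun t => F t x) (n : ℕ) :
    Measurable fun ω => ⨅ t, empiricalMean (F t) (X · ω) n :=
  measurable_iInf_of_continuous
    (fun t => measurable_const.mul (Finset.measurable_sum _ fun k _ => (hFm t).comp (hX k)))
    fun ω => continuous_const.mul (continuous_finsetSum _ fun k _ => hFc (X k ω))

lemma ae_eventually_iInf_empiricalMean_le [Nonempty K]
    (hX : ∀ k, Measurable (X k)) (hlaw : ∀ k, μ.map (X k) = P)
    (hindep : Pairwise fun i j => IndepFun (X i) (X j) μ) (henv : Integrable env P)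
    (hFm : ∀ t, Measurable (F t)) (hFenv : ∀ t x, |F t x| ≤ env x)
    {c : ℝ} (hc : ⨅ t, ∫ x, F t x ∂P < c) :
    ∀ᵐ ω ∂μ, ∀ᶠ n in atTop, ⨅ t, empiricalMean (F t) (X · ω) n ≤ c := by
  obtain ⟨t, ht⟩ := exists_lt_of_ciInf_lt hc
  have hint : Integrable (F t) P :=
    henv.mono' (hFm t).aestronglyMeasurable (ae_of_all _ (hFenv t))
  filter_upwards [ae_tendsto_empiricalMean hX hlaw hindep (hFm t) hint] with ω hω
  filter_upwards [hω.eventually_lt_const ht] with n hn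
  exact (ciInf_le (bddBelow_range_empiricalMean hFenv _ n) t).trans hn.le

lemma ae_eventually_le_iInf_empiricalMean [TopologicalSpace K] [Nonempty K] [CompactSpace K]
    [SecondCountableTopology K] (hX : ∀ k, Measurable (X k)) (hlaw : ∀ k, μ.map (X k) = P)
    (hindep : Pairwise fun i j => IndepFun (X i) (X j) μ) (henv : Integrable env P)
    (hFm : ∀ t, Measurable (F t)) (hFenv : ∀ t x, |F t x| ≤ env x)
    (hFc : ∀ x, Continuous fun t => F t x) {c : ℝ} (hc : c < ⨅ t, ∫ x, F t x ∂P) :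
    ∀ᵐ ω ∂μ, ∀ᶠ n in atTop, c ≤ ⨅ t, empiricalMean (F t) (X · ω) n := by
  have hlt : ∀ t, c < ∫ x, F t x ∂P := fun t =>
    hc.trans_le (ciInf_le (bddBelow_range_integral henv hFm hFenv) t)
  choose U hU hcU using fun t => exists_nhds_lt_integral_lowerEnvelope henv hFm hFc hFenv t (hlt t)
  obtain ⟨S, hS⟩ := CompactSpace.elim_nhds_subcover U hU
  have hint : ∀ i, Integrable (lowerEnvelope F (U i)) P := fun i =>
    henv.mono' (measurable_lowerEnvelope hFm hFc _).aestronglyMeasurable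
      (ae_of_all _ (abs_lowerEnvelope_le hFenv (nonempty_of_mem (hU i))))
  have hslln := (eventually_all_finset S).2 fun i _ =>
    ae_tendsto_empiricalMean hX hlaw hindep (measurable_lowerEnvelope hFm hFc (U i)) (hint i)
  filter_upwards [hslln] with ω hω
  filter_upwards [(eventually_all_finset S).2 fun i hi => (hω i hi).eventually_const_le (hcU i)]
    with n hn
  refine le_ciInf fun s => ?_
  obtain ⟨i, hi, hsi⟩ : ∃ i ∈ S, s ∈ U i := by
    simpa using hS.ge (Set.mem_univ s)
  exact (hn i hi).trans (empiricalMean_mono (lowerEnvelope_le hFenv hsi) _ n)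

theorem ae_tendsto_iInf_empiricalMean [TopologicalSpace K] [Nonempty K] [CompactSpace K]
    [SecondCountableTopology K] (hX : ∀ k, Measurable (X k)) (hlaw : ∀ k, μ.map (X k) = P)
    (hindep : Pairwise fun i j => IndepFun (X i) (X j) μ) (henv : Integrable env P)
    (hFm : ∀ t, Measurable (F t)) (hFenv : ∀ t x, |F t x| ≤ env x)
    (hFc : ∀ x, Continuous fun t => F t x) :
    ∀ᵐ ω ∂μ, Tendsto (fun n => ⨅ t, empiricalMean (F t) (X · ω) n) atTop
      (𝓝 (⨅ t, ∫ x, F t x ∂P)) :=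
  ae_tendsto_of_ae_eventually_bounds
    (fun _ hc => ae_eventually_le_iInf_empiricalMean hX hlaw hindep henv hFm hFenv hFc hc)
    (fun _ hc => ae_eventually_iInf_empiricalMean_le hX hlaw hindep henv hFm hFenv hc)

end UniformStrongLaw

theorem compact_parameter_consistency_general
    {m : ℕ}
    (T To : Set (EuclideanSpace ℝ (Fin m))) (hTne : T.Nonempty)
    (hTcomp : IsCompact T) (hTTo : T ⊆ To)
    (Pt : EuclideanSpace ℝ (Fin m) → Measure ℝ)
    (P : Measure ℝ)
    (f : ℝ → ℝ)
    (ft : EuclideanSpace ℝ (Fin m) → ℝ → ℝ)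
    (hftm : ∀ t ∈ T, Measurable (ft t))
    (hfte : ∀ t ∈ T, ∫ x, ft t x ∂P = ∫ x, f x ∂(Pt t))
    -- the measurable extension `f_{T_o}`, continuously differentiable in `(x, t)`
    (fTo : ℝ → EuclideanSpace ℝ (Fin m) → ℝ)
    (hagree : ∀ t ∈ T, ∀ x : ℝ, fTo x t = ft t x)
    (hC1 : ContDiffOn ℝ 1 (fun p : ℝ × EuclideanSpace ℝ (Fin m) => fTo p.1 p.2)
      (Set.univ ×ˢ To))
    (hsupint : Integrable (fun x => ⨆ t : T, |ft t x|) P)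
    (μ : Measure (ℕ → ℝ))
    (hmap : ∀ k : ℕ, μ.map (fun ω => ω k) = P)
    (hind : iIndepFun
      (fun k (ω : ℕ → ℝ) => ω k) μ) :
    ∃ H : ℕ → (ℕ → ℝ) → EReal,
      (∀ n : ℕ, IsMinMeasCover μ
        (fun ω => eabs ((⨅ t : T, (((n : ℝ)⁻¹ *
            ∑ k ∈ Finset.range n, ft t (ω k) : ℝ) : EReal)) -
          ⨅ t : T, ((∫ x, f x ∂(Pt t) : ℝ) : EReal))) (H n)) ∧
      ∀ᵐ ω ∂μ, Tendsto (fun n : ℕ => H n ω) atTop (𝓝 (0 : EReal)) := by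
  have : Nonempty T := hTne.to_subtype
  have : CompactSpace T := isCompact_iff_compactSpace.mp hTcomp
  have hcont : ∀ x, Continuous fun t : T => ft t x := fun x => by
    have hx : ContinuousOn (fun t => fTo x t) T := hC1.continuousOn.comp
      (Continuous.prodMk_right x).continuousOn fun t ht => ⟨trivial, hTTo ht⟩
    exact (hx.comp_continuous continuous_subtype_val Subtype.prop).congr fun t => hagree t t.2 x
  have hFenv : ∀ (t : T) x, |ft t x| ≤ ⨆ s : T, |ft s x| := fun t x =>
    le_ciSup (isCompact_range (hcont x).abs).bddAbove t
  have hmean : (fun t : T => ∫ x, ft t x ∂P) = fun t : T => ∫ x, f x ∂(Pt t) :=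
    funext fun t => hfte t t.2
  have hFm : ∀ t : T, Measurable (ft t) := fun t => hftm t t.2
  have hlim := ae_tendsto_iInf_empiricalMean (X := fun k (ω : ℕ → ℝ) => ω k)
    measurable_pi_apply hmap (fun i j hij => hind.indepFun hij) hsupint hFm hFenv hcont
  have hbdd := bddBelow_range_integral hsupint hFm hFenv
  rw [hmean] at hlim hbdd
  set E := ⨅ t : T, ∫ x, f x ∂(Pt t)
  refine ⟨fun n ω => ((|(⨅ t : T, empiricalMean (ft t) ω n) - E| : ℝ) : EReal), fun n => ?_, ?_⟩
  · convert isMinMeasCover_self ((measurable_iInf_empiricalMean measurable_pi_apply hFm hcont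
      n).sub_const E).abs.coe_real_ereal using 1
    funext ω
    exact eabs_iInf_coe_sub_iInf_coe (bddBelow_range_empiricalMean hFenv ω n) hbdd
  · filter_upwards [hlim] with ω hω
    have hω' := (hω.sub_const E).abs
    rw [sub_self, abs_zero] at hω'
    exact (continuous_coe_real_ereal.tendsto 0).comp hω'

/-- Suppose `T ⊆ ℝ^m` is compact, `T_o` is an open set containing `T`, and
`f_{T_o} : ℝ × T_o → ℝ` is a Borel measurable extension of the family `(f_t)_{t∈T}` which is
continuously differentiable in both arguments on `ℝ × T_o`. If `E^P(sup_{t∈T} |f_t|) < +∞`,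
then `Ê̲_n^𝒫(f)` is a strongly consistent estimator of `E̲^𝒫(f)`. -/
theorem compact_parameter_consistency
    {m : ℕ}
    (T To : Set (EuclideanSpace ℝ (Fin m))) (hTne : T.Nonempty)
    (hTcomp : IsCompact T) (hTo : IsOpen To) (hTTo : T ⊆ To)
    (Pt : EuclideanSpace ℝ (Fin m) → Measure ℝ)
    (hPt : ∀ t ∈ T, IsProbabilityMeasure (Pt t))
    (P : Measure ℝ) [IsProbabilityMeasure P]
    (f : ℝ → ℝ) (hf : Measurable f)
    (hfint : ∀ t ∈ T, Integrable f (Pt t))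
    (hsup : BddAbove ((fun t => ∫ x, |f x| ∂(Pt t)) '' T))
    (ft : EuclideanSpace ℝ (Fin m) → ℝ → ℝ)
    (hftm : ∀ t ∈ T, Measurable (ft t)) (hfti : ∀ t ∈ T, Integrable (ft t) P)
    (hfte : ∀ t ∈ T, ∫ x, ft t x ∂P = ∫ x, f x ∂(Pt t))
    (hftea : ∀ t ∈ T, ∫ x, |ft t x| ∂P = ∫ x, |f x| ∂(Pt t))
    -- the measurable extension `f_{T_o}`, continuously differentiable in `(x, t)`
    (fTo : ℝ → EuclideanSpace ℝ (Fin m) → ℝ)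
    (hfTom : Measurable (fun p : ℝ × EuclideanSpace ℝ (Fin m) => fTo p.1 p.2))
    (hagree : ∀ t ∈ T, ∀ x : ℝ, fTo x t = ft t x)
    (hC1 : ContDiffOn ℝ 1 (fun p : ℝ × EuclideanSpace ℝ (Fin m) => fTo p.1 p.2)
      (Set.univ ×ˢ To))
    (hsupint : Integrable (fun x => ⨆ t : T, |ft t x|) P)
    (μ : Measure (ℕ → ℝ)) [IsProbabilityMeasure μ]
    (hmap : ∀ k : ℕ, μ.map (fun ω => ω k) = P)
    (hind : iIndepFun
      (fun k (ω : ℕ → ℝ) => ω k) μ) :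
    ∃ H : ℕ → (ℕ → ℝ) → EReal,
      (∀ n : ℕ, IsMinMeasCover μ
        (fun ω => eabs ((⨅ t : T, (((n : ℝ)⁻¹ *
            ∑ k ∈ Finset.range n, ft t (ω k) : ℝ) : EReal)) -
          ⨅ t : T, ((∫ x, f x ∂(Pt t) : ℝ) : EReal))) (H n)) ∧
      ∀ᵐ ω ∂μ, Tendsto (fun n : ℕ => H n ω) atTop (𝓝 (0 : EReal)) :=
  compact_parameter_consistency_general T To hTne hTcomp hTTo Pt P f ft hftm hfte fTo hagree hC1
    hsupint μ hmap hind
end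
end

section
/- Importance sampling, Lipschitz densities: in the importance-sampling setting, suppose the index set T is a bounded subset of ℝ^m equipped with a norm ‖·‖. If there exists a Borel measurable map F : ℝ → ℝ with ∫_ℝ |f(x)| F(x) dx < +∞ such that |p_s(x) − p_t(x)| ≤ ‖s − t‖ · F(x) for all s, t ∈ T and all x ∈ ℝ, then the importance-sampling estimator Ê̲_n^{𝒫/P}(f) is a strongly consistent estimator of E̲^𝒫(f). -/
/-
The importance weights `g t = f * p_t / p` have `P`-mean `E^{P_t} f`, and the Lipschitz hypothesis
gives `|g s - g t| ≤ N (s - t) * G` with the `P`-integrable envelope `G = |f| * F⁺ / p`. So the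
sample means of the `g t` are Lipschitz in `t` with constant the sample mean of `G`, and their
`P`-means with constant `E^P G`. As `N` is a norm on a finite-dimensional space, `T` is totally
bounded for `N`; applying the strong law to `G` and to `g s` for `s` in a countable family of
finite nets of `T` therefore yields almost sure uniform convergence over `T`, hence convergence
of the infima. The same nets show that the infimum over `T` is an infimum over a countable set,
so the estimator is measurable and is its own minimal measurable cover.
-/

open MeasureTheory Filter Topology ProbabilityTheory
open scoped ENNReal

noncomputable section

open Finset

section Infima

variable {ι : Type*} [Nonempty ι]

theorem abs_ciInf_sub_ciInf_le {f g : ι → ℝ} (hf : BddBelow (Set.range f))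
    (hg : BddBelow (Set.range g)) {ε : ℝ} (h : ∀ i, |f i - g i| ≤ ε) :
    |(⨅ i, f i) - ⨅ i, g i| ≤ ε := by
  have hfg : (⨅ i, f i) - ε ≤ ⨅ i, g i :=
    le_ciInf fun i => by linarith [ciInf_le hf i, (abs_le.1 (h i)).2]
  have hgf : (⨅ i, g i) - ε ≤ ⨅ i, f i :=
    le_ciInf fun i => by linarith [ciInf_le hg i, (abs_le.1 (h i)).1]
  exact abs_sub_le_iff.2 ⟨by linarith, by linarith⟩

theorem TendstoUniformly.tendsto_ciInf {F : ℕ → ι → ℝ} {f : ι → ℝ}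
    (hF : TendstoUniformly F f atTop) (hf : BddBelow (Set.range f)) :
    Tendsto (fun n => ⨅ i, F n i) atTop (𝓝 (⨅ i, f i)) := by
  obtain ⟨b, hb⟩ := hf
  refine Metric.tendsto_nhds.2 fun ε hε => ?_
  filter_upwards [Metric.tendstoUniformly_iff.1 hF (ε / 2) (half_pos hε)] with n hn
  have hclose : ∀ i, |F n i - f i| ≤ ε / 2 := fun i => by
    rw [abs_sub_comm, ← Real.dist_eq]; exact (hn i).le
  have hFb : BddBelow (Set.range (F n)) := ⟨b - ε / 2, by
    rintro _ ⟨i, rfl⟩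
    linarith [hb ⟨i, rfl⟩, (abs_le.1 (hclose i)).1]⟩
  rw [Real.dist_eq]
  exact (abs_ciInf_sub_ciInf_le hFb ⟨b, hb⟩ hclose).trans_lt (half_lt_self hε)

theorem ciInf_eq_ciInf_subtype_of_forall_exists_le {φ : ι → ℝ}
    (hφ : BddBelow (Set.range φ)) {D : Set ι} (hD : ∀ t, ∀ ε > 0, ∃ d ∈ D, φ d ≤ φ t + ε) :
    ⨅ t, φ t = ⨅ d : D, φ d := by
  obtain ⟨d₀, hd₀, -⟩ := hD (Classical.arbitrary ι) 1 one_pos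
  have : Nonempty D := ⟨⟨d₀, hd₀⟩⟩
  have hφD : BddBelow (Set.range fun d : D => φ d) := hφ.mono (Set.range_comp_subset_range _ _)
  refine le_antisymm (le_ciInf fun d => ciInf_le hφ d)
    (le_ciInf fun t => le_of_forall_pos_le_add fun ε hε => ?_)
  obtain ⟨d, hd, hle⟩ := hD t ε hε
  exact (ciInf_le hφD ⟨d, hd⟩).trans hle

theorem EReal.iInf_coe_eq_coe_ciInf {h : ι → ℝ}
    (hb : BddBelow (Set.range h)) : ⨅ i, (h i : EReal) = ((⨅ i, h i : ℝ) : EReal) :=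
  (Monotone.map_ciInf_of_continuousAt continuous_coe_real_ereal.continuousAt
    (fun _ _ => EReal.coe_le_coe_iff.2) hb).symm

theorem eabs_iInf_coe_sub_iInf_coe_s15 {a b : ι → ℝ}
    (ha : BddBelow (Set.range a)) (hb : BddBelow (Set.range b)) :
    eabs ((⨅ i, (a i : EReal)) - ⨅ i, (b i : EReal)) = ((|(⨅ i, a i) - ⨅ i, b i| : ℝ) : EReal) := by
  rw [EReal.iInf_coe_eq_coe_ciInf ha, EReal.iInf_coe_eq_coe_ciInf hb, ← EReal.coe_sub, eabs,
    ← EReal.coe_neg, abs_eq_max_neg]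
  exact (Monotone.map_max fun _ _ => EReal.coe_le_coe_iff.2).symm

end Infima

theorem isMinMeasCover_of_eq {Ω : Type*} [MeasurableSpace Ω] {μ : Measure Ω} {h g : Ω → EReal}
    (hg : Measurable g) (hhg : ∀ ω, h ω = g ω) : IsMinMeasCover μ h g :=
  ⟨hg, fun ω => (hhg ω).le, fun _ _ hle => ae_of_all _ fun ω => (hhg ω).symm.le.trans (hle ω)⟩

section FiniteDimensional

variable {E : Type*} [NormedAddCommGroup E] [NormedSpace ℝ E] [FiniteDimensional ℝ E]

theorem Seminorm.continuous_of_finiteDimensional (N : Seminorm ℝ E) : Continuous N :=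
  continuousOn_univ.1 (N.convexOn.continuousOn isOpen_univ)

theorem Seminorm.exists_pos_mul_norm_le (N : Seminorm ℝ E) (hN : ∀ v, N v = 0 → v = 0) :
    ∃ c > 0, ∀ v, c * ‖v‖ ≤ N v := by
  rcases subsingleton_or_nontrivial E with _ | _
  · exact ⟨1, one_pos, fun v => by simp [Subsingleton.elim v 0]⟩
  obtain ⟨v₀, hv₀, hmin⟩ := (isCompact_sphere (0 : E) 1).exists_isMinOn
    (NormedSpace.sphere_nonempty.2 zero_le_one) N.continuous_of_finiteDimensional.continuousOn
  have hv₀1 : ‖v₀‖ = 1 := by simpa using hv₀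
  have hc : 0 < N v₀ := (apply_nonneg N v₀).lt_of_ne fun h => by simp [hN v₀ h.symm] at hv₀1
  refine ⟨N v₀, hc, fun v => ?_⟩
  rcases eq_or_ne v 0 with rfl | hv
  · simp
  have hnv : 0 < ‖v‖ := norm_pos_iff.2 hv
  have hle := isMinOn_iff.1 hmin (‖v‖⁻¹ • v) (by simp [norm_smul, hnv.ne'])
  rw [map_smul_eq_mul, norm_inv, norm_norm] at hle
  calc N v₀ * ‖v‖ ≤ ‖v‖⁻¹ * N v * ‖v‖ := by gcongr
    _ = N v := by field_simp

theorem Seminorm.exists_seq_finset_net (N : Seminorm ℝ E) (hN : ∀ v, N v = 0 → v = 0)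
    {T : Set E} (hT : ∃ R, ∀ t ∈ T, N t ≤ R) :
    ∃ S : ℕ → Finset T, ∀ δ > 0, ∃ j, ∀ t : T, ∃ s ∈ S j, N (t - s) ≤ δ := by
  obtain ⟨c, hc, hcN⟩ := N.exists_pos_mul_norm_le hN
  obtain ⟨C, hC, hNC⟩ :=
    Seminorm.bound_of_continuous_normedSpace N N.continuous_of_finiteDimensional
  obtain ⟨R, hR⟩ := hT
  have hTb : Bornology.IsBounded T := isBounded_iff_forall_norm_le.2
    ⟨R / c, fun t ht => (le_div_iff₀' hc).2 ((hcN t).trans (hR t ht))⟩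
  have hnet : ∀ j : ℕ, ∃ S : Finset T, ∀ t : T, ∃ s ∈ S, ‖(t : E) - s‖ < 1 / (j + 1) := by
    intro j
    obtain ⟨S, hST, hSfin, hcover⟩ := Metric.finite_approx_of_totallyBounded
      (hTb.isCompact_closure.totallyBounded.subset subset_closure) _ Nat.one_div_pos_of_nat
    refine ⟨(hSfin.preimage Subtype.val_injective.injOn).toFinset, fun t => ?_⟩
    obtain ⟨s, hs, hts⟩ := Set.mem_iUnion₂.1 (hcover t.2)
    exact ⟨⟨s, hST hs⟩, by simpa using hs, by simpa [dist_eq_norm] using hts⟩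
  choose S hS using hnet
  refine ⟨S, fun δ hδ => ?_⟩
  obtain ⟨j, hj⟩ := exists_nat_one_div_lt (div_pos hδ hC)
  refine ⟨j, fun t => ?_⟩
  obtain ⟨s, hs, hts⟩ := hS j t
  exact ⟨s, hs, (hNC _).trans ((le_div_iff₀' hC).1 (hts.trans hj).le)⟩

end FiniteDimensional

section Density

variable {α : Type*} [MeasurableSpace α] {μ : Measure α} {p : α → ℝ}

theorem integrable_withDensity_ofReal_iff (hp : Measurable p) (hp0 : ∀ x, 0 ≤ p x)
    {h : α → ℝ} :
    Integrable h (μ.withDensity fun x => ENNReal.ofReal (p x)) ↔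
      Integrable (fun x => h x * p x) μ := by
  rw [integrable_withDensity_iff hp.ennreal_ofReal (ae_of_all _ fun _ => ENNReal.ofReal_lt_top)]
  simp only [ENNReal.toReal_ofReal (hp0 _)]

theorem integral_withDensity_ofReal (hp : Measurable p) (hp0 : ∀ x, 0 ≤ p x) (h : α → ℝ) :
    ∫ x, h x ∂(μ.withDensity fun x => ENNReal.ofReal (p x)) = ∫ x, h x * p x ∂μ := by
  rw [integral_withDensity_eq_integral_toReal_smul hp.ennreal_ofReal
    (ae_of_all _ fun _ => ENNReal.ofReal_lt_top)]
  simp only [ENNReal.toReal_ofReal (hp0 _), smul_eq_mul, mul_comm]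

theorem integrable_div_withDensity (hp : Measurable p) (hp0 : ∀ x, 0 ≤ p x) {h : α → ℝ}
    (hh : Integrable h μ) :
    Integrable (fun x => h x / p x) (μ.withDensity fun x => ENNReal.ofReal (p x)) := by
  rw [integrable_withDensity_ofReal_iff hp hp0]
  refine hh.mono ((hh.1.aemeasurable.div hp.aemeasurable).mul hp.aemeasurable).aestronglyMeasurable
    (ae_of_all _ fun x => ?_)
  rcases eq_or_ne (p x) 0 with h0 | h0
  · simp [h0]
  · rw [div_mul_cancel₀ _ h0]

theorem integral_div_withDensity (hp : Measurable p) (hp0 : ∀ x, 0 ≤ p x) {h : α → ℝ}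
    (hsupp : ∀ x, p x = 0 → h x = 0) :
    ∫ x, h x / p x ∂(μ.withDensity fun x => ENNReal.ofReal (p x)) = ∫ x, h x ∂μ := by
  rw [integral_withDensity_ofReal hp hp0]
  refine integral_congr_ae (ae_of_all _ fun x => ?_)
  rcases eq_or_ne (p x) 0 with h0 | h0
  · simp [h0, hsupp x h0]
  · exact div_mul_cancel₀ _ h0

theorem integrable_mul_div_withDensity (hp : Measurable p) (hp0 : ∀ x, 0 ≤ p x) {q f : α → ℝ}
    (hq : Measurable q) (hq0 : ∀ x, 0 ≤ q x)
    (hf : Integrable f (μ.withDensity fun x => ENNReal.ofReal (q x))) :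
    Integrable (fun x => f x * q x / p x) (μ.withDensity fun x => ENNReal.ofReal (p x)) :=
  integrable_div_withDensity hp hp0 ((integrable_withDensity_ofReal_iff hq hq0).1 hf)

theorem integral_mul_div_withDensity (hp : Measurable p) (hp0 : ∀ x, 0 ≤ p x) {q : α → ℝ}
    (hq : Measurable q) (hq0 : ∀ x, 0 ≤ q x) (hsupp : ∀ x, q x ≠ 0 → p x ≠ 0) (f : α → ℝ) :
    ∫ x, f x * q x / p x ∂(μ.withDensity fun x => ENNReal.ofReal (p x)) =
      ∫ x, f x ∂(μ.withDensity fun x => ENNReal.ofReal (q x)) := by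
  rw [integral_withDensity_ofReal hq hq0,
    integral_div_withDensity hp hp0 fun x hx => by rw [not_imp_not.1 (hsupp x) hx, mul_zero]]

theorem integrable_abs_mul_max_zero {f F : α → ℝ} (hf : Measurable f) (hF : Measurable F)
    (hfF : ∫⁻ x, ENNReal.ofReal (|f x| * F x) ∂μ ≠ ⊤) :
    Integrable (fun x => |f x| * max (F x) 0) μ := by
  refine ⟨(hf.abs.mul (hF.max measurable_const)).aestronglyMeasurable, ?_⟩
  rw [hasFiniteIntegral_iff_ofReal (ae_of_all _ fun x => by positivity)]
  have hpos : ∀ x, ENNReal.ofReal (|f x| * max (F x) 0) = ENNReal.ofReal (|f x| * F x) :=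
    fun x => by rw [mul_max_of_nonneg _ _ (abs_nonneg (f x)), mul_zero, ENNReal.ofReal_max,
      ENNReal.ofReal_zero, max_eq_left zero_le]
  simpa only [hpos] using hfF.lt_top

end Density

theorem abs_mul_div_sub_mul_div_le {a q₁ q₂ p c F : ℝ} (hp : 0 ≤ p) (hc : 0 ≤ c)
    (h : |q₁ - q₂| ≤ c * F) : |a * q₁ / p - a * q₂ / p| ≤ c * (|a| * max F 0 / p) := by
  rw [← sub_div, ← mul_sub, abs_div, abs_mul, abs_of_nonneg hp, ← mul_div_assoc]
  refine div_le_div_of_nonneg_right ?_ hp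
  calc |a| * |q₁ - q₂| ≤ |a| * (c * max F 0) := by
        gcongr; exact h.trans (by gcongr; exact le_max_left _ _)
    _ = c * (|a| * max F 0) := by ring

def sampleMean (n : ℕ) (h : ℝ → ℝ) (ω : ℕ → ℝ) : ℝ :=
  (n : ℝ)⁻¹ * ∑ k ∈ range n, h (ω k)

theorem ae_tendsto_sampleMean {μ : Measure (ℕ → ℝ)} [IsProbabilityMeasure μ] {P : Measure ℝ}
    (hmap : ∀ k : ℕ, μ.map (fun ω => ω k) = P)
    (hind : iIndepFun (m := fun _ : ℕ => (inferInstance : MeasurableSpace ℝ))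
      (fun k (ω : ℕ → ℝ) => ω k) μ)
    {h : ℝ → ℝ} (hm : Measurable h) (hi : Integrable h P) :
    ∀ᵐ ω ∂μ, Tendsto (fun n => sampleMean n h ω) atTop (𝓝 (∫ x, h x ∂P)) := by
  have hident : ∀ k, IdentDistrib (fun ω : ℕ → ℝ => ω k) (fun ω => ω 0) μ μ := fun k =>
    ⟨(measurable_pi_apply k).aemeasurable, (measurable_pi_apply 0).aemeasurable,
      by rw [hmap k, hmap 0]⟩
  have hint : Integrable (fun ω : ℕ → ℝ => h (ω 0)) μ := by
    rw [← hmap 0] at hi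
    exact hi.comp_measurable (measurable_pi_apply 0)
  have hmean : ∫ ω, h (ω 0) ∂μ = ∫ x, h x ∂P := by
    rw [← hmap 0, integral_map (measurable_pi_apply 0).aemeasurable hm.aestronglyMeasurable]
  filter_upwards [strong_law_ae (fun k (ω : ℕ → ℝ) => h (ω k)) hint
    (fun i j hij => (hind.indepFun hij).comp hm hm) (fun k => (hident k).comp hm)] with ω hω
  exact hmean ▸ hω

theorem abs_sampleMean_sub_le {g₁ g₂ G : ℝ → ℝ} {c : ℝ}
    (h : ∀ x, |g₁ x - g₂ x| ≤ c * G x) (n : ℕ) (ω : ℕ → ℝ) :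
    |sampleMean n g₁ ω - sampleMean n g₂ ω| ≤ c * sampleMean n G ω := by
  have hn : (0 : ℝ) ≤ (n : ℝ)⁻¹ := by positivity
  calc |sampleMean n g₁ ω - sampleMean n g₂ ω|
      = (n : ℝ)⁻¹ * |∑ k ∈ range n, (g₁ (ω k) - g₂ (ω k))| := by
        rw [sampleMean, sampleMean, ← mul_sub, ← sum_sub_distrib, abs_mul, abs_of_nonneg hn]
    _ ≤ (n : ℝ)⁻¹ * ∑ k ∈ range n, c * G (ω k) := by
        gcongr
        exact (abs_sum_le_sum_abs _ _).trans (sum_le_sum fun k _ => h (ω k))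
    _ = c * sampleMean n G ω := by rw [sampleMean, ← mul_sum]; ring

theorem abs_integral_sub_integral_le {α : Type*} [MeasurableSpace α] {μ : Measure α}
    {g₁ g₂ G : α → ℝ} {c : ℝ} (hg₁ : Integrable g₁ μ) (hg₂ : Integrable g₂ μ)
    (hG : Integrable G μ) (h : ∀ x, |g₁ x - g₂ x| ≤ c * G x) :
    |∫ x, g₁ x ∂μ - ∫ x, g₂ x ∂μ| ≤ c * ∫ x, G x ∂μ := by
  rw [← integral_sub hg₁ hg₂, ← integral_const_mul]
  exact norm_integral_le_of_norm_le (hG.const_mul c)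
    (ae_of_all _ fun x => (Real.norm_eq_abs _).trans_le (h x))

section Nets

variable {ι : Type*} {ρ : ι → ι → ℝ}

theorem bddBelow_range_of_net (hρ : ∀ s t, 0 ≤ ρ s t) {φ : ι → ℝ} {L : ℝ}
    (hφ : ∀ s t, |φ s - φ t| ≤ ρ s t * L) (S : Finset ι) (hS : ∀ t, ∃ s ∈ S, ρ t s ≤ 1) :
    BddBelow (Set.range φ) := by
  obtain ⟨b, hb⟩ := (S.image φ).bddBelow
  refine ⟨b - |L|, ?_⟩
  rintro _ ⟨t, rfl⟩
  obtain ⟨s, hs, hts⟩ := hS t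
  have hρL : ρ t s * L ≤ |L| :=
    (mul_le_mul_of_nonneg_left (le_abs_self L) (hρ t s)).trans
      (mul_le_of_le_one_left (abs_nonneg L) hts)
  have hφts := (abs_le.1 (hφ t s)).1
  have hbs := hb (mem_coe.2 (mem_image_of_mem φ hs))
  linarith

theorem tendstoUniformly_of_net (hρ : ∀ s t, 0 ≤ ρ s t) {A : ℕ → ι → ℝ} {B : ι → ℝ}
    {K : ℕ → ℝ} {C L : ℝ} (hA : ∀ n s t, |A n s - A n t| ≤ ρ s t * K n)
    (hB : ∀ s t, |B s - B t| ≤ ρ s t * L) (hK : Tendsto K atTop (𝓝 C))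
    (S : ℕ → Finset ι) (hS : ∀ δ > 0, ∃ j, ∀ t, ∃ s ∈ S j, ρ t s ≤ δ)
    (hconv : ∀ j, ∀ s ∈ S j, Tendsto (A · s) atTop (𝓝 (B s))) :
    TendstoUniformly A B atTop := by
  refine Metric.tendstoUniformly_iff.2 fun ε hε => ?_
  set δ := ε / (3 * (|C| + 1 + |L|))
  have hδ : δ * (|C| + 1) + δ * |L| = ε / 3 := by
    simp only [δ]; field_simp
  obtain ⟨j, hj⟩ := hS δ (by positivity)
  have hKev : ∀ᶠ n in atTop, K n < |C| + 1 :=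
    hK.eventually_lt_const (by linarith [le_abs_self C])
  have hSev : ∀ᶠ n in atTop, ∀ s ∈ S j, |A n s - B s| < ε / 3 :=
    (eventually_all_finset _).2 fun s hs =>
      (Metric.tendsto_nhds.1 (hconv j s hs) _ (by positivity)).mono fun n hn => hn
  filter_upwards [hKev, hSev] with n hKn hSn t
  obtain ⟨s, hs, hts⟩ := hj t
  have hAts : |A n t - A n s| ≤ δ * (|C| + 1) :=
    (hA n t s).trans <| (mul_le_mul_of_nonneg_left hKn.le (hρ t s)).trans <|
      mul_le_mul_of_nonneg_right hts (by positivity)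
  have hBts : |B t - B s| ≤ δ * |L| :=
    (hB t s).trans <| (mul_le_mul_of_nonneg_left (le_abs_self _) (hρ t s)).trans <|
      mul_le_mul_of_nonneg_right hts (abs_nonneg _)
  have hε3 := abs_lt.1 (hSn s hs)
  rw [Real.dist_eq, abs_sub_lt_iff]
  constructor <;> linarith [abs_le.1 hAts, abs_le.1 hBts]

theorem measurable_iInf_sampleMean [Nonempty ι] (hρ : ∀ s t, 0 ≤ ρ s t) (S : ℕ → Finset ι)
    (hS : ∀ δ > 0, ∃ j, ∀ t, ∃ s ∈ S j, ρ t s ≤ δ) {g : ι → ℝ → ℝ} (hg : ∀ t, Measurable (g t))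
    {G : ℝ → ℝ} (hlip : ∀ s t x, |g s x - g t x| ≤ ρ s t * G x) (n : ℕ) :
    Measurable fun ω => ⨅ t, sampleMean n (g t) ω := by
  set D : Set ι := ⋃ j, (S j : Set ι)
  have : Countable D := (Set.countable_iUnion fun j => (S j).countable_toSet).to_subtype
  have hmean : ∀ t, Measurable (sampleMean n (g t)) := fun t =>
    measurable_const.mul (Finset.measurable_sum _ fun k _ => (hg t).comp (measurable_pi_apply k))
  suffices h : (fun ω => ⨅ t, sampleMean n (g t) ω) = fun ω => ⨅ d : D, sampleMean n (g d) ω by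
    rw [h]; exact Measurable.iInf fun d => hmean d
  funext ω
  have hφ := fun s t => abs_sampleMean_sub_le (hlip s t) n ω
  obtain ⟨j₁, hj₁⟩ := hS 1 one_pos
  refine ciInf_eq_ciInf_subtype_of_forall_exists_le (bddBelow_range_of_net hρ hφ (S j₁) hj₁)
    fun t ε hε => ?_
  set K := sampleMean n G ω
  obtain ⟨j, hj⟩ := hS (ε / (|K| + 1)) (by positivity)
  obtain ⟨s, hs, hts⟩ := hj t
  refine ⟨s, Set.mem_iUnion.2 ⟨j, hs⟩, ?_⟩
  have hρK : ρ t s * K ≤ ε := calc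
    ρ t s * K ≤ ρ t s * (|K| + 1) :=
      mul_le_mul_of_nonneg_left (by linarith [le_abs_self K]) (hρ t s)
    _ ≤ ε / (|K| + 1) * (|K| + 1) := mul_le_mul_of_nonneg_right hts (by positivity)
    _ = ε := by field_simp
  linarith [(abs_le.1 (hφ t s)).1]

theorem ae_tendsto_iInf_sampleMean [Nonempty ι] {μ : Measure (ℕ → ℝ)} [IsProbabilityMeasure μ]
    {P : Measure ℝ} (hmap : ∀ k : ℕ, μ.map (fun ω => ω k) = P)
    (hind : iIndepFun (m := fun _ : ℕ => (inferInstance : MeasurableSpace ℝ))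
      (fun k (ω : ℕ → ℝ) => ω k) μ)
    (hρ : ∀ s t, 0 ≤ ρ s t) (S : ℕ → Finset ι) (hS : ∀ δ > 0, ∃ j, ∀ t, ∃ s ∈ S j, ρ t s ≤ δ)
    {g : ι → ℝ → ℝ} (hg : ∀ t, Measurable (g t)) (hgi : ∀ t, Integrable (g t) P)
    {G : ℝ → ℝ} (hG : Measurable G) (hGi : Integrable G P)
    (hlip : ∀ s t x, |g s x - g t x| ≤ ρ s t * G x) :
    ∀ᵐ ω ∂μ, Tendsto (fun n => ⨅ t, sampleMean n (g t) ω) atTop (𝓝 (⨅ t, ∫ x, g t x ∂P)) := by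
  have hB : ∀ s t, |∫ x, g s x ∂P - ∫ x, g t x ∂P| ≤ ρ s t * ∫ x, G x ∂P := fun s t =>
    abs_integral_sub_integral_le (hgi s) (hgi t) hGi (hlip s t)
  have hnet : ∀ᵐ ω ∂μ, ∀ j, ∀ s ∈ S j,
      Tendsto (fun n => sampleMean n (g s) ω) atTop (𝓝 (∫ x, g s x ∂P)) :=
    ae_all_iff.2 fun j => (eventually_all_finset _).2 fun s _ =>
      ae_tendsto_sampleMean hmap hind (hg s) (hgi s)
  obtain ⟨j₁, hj₁⟩ := hS 1 one_pos
  filter_upwards [ae_tendsto_sampleMean hmap hind hG hGi, hnet] with ω hK hω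
  exact (tendstoUniformly_of_net hρ (fun n s t => abs_sampleMean_sub_le (hlip s t) n ω) hB hK
    S hS hω).tendsto_ciInf (bddBelow_range_of_net hρ hB (S j₁) hj₁)

end Nets

theorem importance_sampling_lipschitz_consistency_general
    {m : ℕ} (N : Seminorm ℝ (Fin m → ℝ)) (hN : ∀ v, N v = 0 → v = 0)
    (T : Set (Fin m → ℝ)) (hTne : T.Nonempty)
    (hTbdd : ∃ R : ℝ, ∀ t ∈ T, N t ≤ R)
    -- the central probability measure `P`, with density `p`
    (p : ℝ → ℝ) (hpm : Measurable p) (hp0 : ∀ x, 0 ≤ p x)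
    (P : Measure ℝ) (hP : P = volume.withDensity (fun x => ENNReal.ofReal (p x)))
    -- the densities `p_t` of the measures `P_t`, `t ∈ T`
    (pt : (Fin m → ℝ) → ℝ → ℝ)
    (hptm : ∀ t ∈ T, Measurable (pt t)) (hpt0 : ∀ t ∈ T, ∀ x, 0 ≤ pt t x)
    (Pt : (Fin m → ℝ) → Measure ℝ)
    (hPt : ∀ t ∈ T, Pt t = volume.withDensity (fun x => ENNReal.ofReal (pt t x)))
    (hsupp : ∀ t ∈ T, ∀ x, pt t x ≠ 0 → p x ≠ 0)
    (f : ℝ → ℝ) (hf : Measurable f)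
    (hfint : ∀ t ∈ T, Integrable f (Pt t))
    (F : ℝ → ℝ) (hFm : Measurable F)
    (hfF : ∫⁻ x, ENNReal.ofReal (|f x| * F x) ≠ ⊤)
    (hlip : ∀ s ∈ T, ∀ t ∈ T, ∀ x : ℝ, |pt s x - pt t x| ≤ N (s - t) * F x)
    (μ : Measure (ℕ → ℝ)) [IsProbabilityMeasure μ]
    (hmap : ∀ k : ℕ, μ.map (fun ω => ω k) = P)
    (hind : iIndepFun (m := fun _ : ℕ => (inferInstance : MeasurableSpace ℝ))
      (fun k (ω : ℕ → ℝ) => ω k) μ) :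
    ∃ H : ℕ → (ℕ → ℝ) → EReal,
      (∀ n : ℕ, IsMinMeasCover μ
        (fun ω => eabs ((⨅ t : T, (((n : ℝ)⁻¹ *
            ∑ k ∈ Finset.range n, f (ω k) * pt t (ω k) / p (ω k) : ℝ) : EReal)) -
          ⨅ t : T, ((∫ x, f x ∂(Pt t) : ℝ) : EReal))) (H n)) ∧
      ∀ᵐ ω ∂μ, Tendsto (fun n : ℕ => H n ω) atTop (𝓝 (0 : EReal)) := by
  have : Nonempty T := hTne.to_subtype
  obtain ⟨S, hS⟩ := N.exists_seq_finset_net hN hTbdd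
  obtain ⟨j₁, hj₁⟩ := hS 1 one_pos
  have hρ : ∀ s t : T, 0 ≤ N (s - t) := fun s t => apply_nonneg N _
  set g : T → ℝ → ℝ := fun t x => f x * pt t x / p x
  -- `F⁺` rather than `F`: `hfF` controls only the positive part of `|f| * F`
  set G : ℝ → ℝ := fun x => |f x| * max (F x) 0 / p x
  have hg : ∀ t, Measurable (g t) := fun t => (hf.mul (hptm t t.2)).div hpm
  have hgi : ∀ t, Integrable (g t) P := fun t => hP ▸ integrable_mul_div_withDensity hpm hp0
    (hptm t t.2) (hpt0 t t.2) (hPt t t.2 ▸ hfint t t.2)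
  have hgP : ∀ t : T, ∫ x, g t x ∂P = ∫ x, f x ∂(Pt t) := fun t => by
    rw [hP, hPt t t.2]
    exact integral_mul_div_withDensity hpm hp0 (hptm t t.2) (hpt0 t t.2) (hsupp t t.2) f
  have hG : Measurable G := (hf.abs.mul (hFm.max measurable_const)).div hpm
  have hGi : Integrable G P :=
    hP ▸ integrable_div_withDensity hpm hp0 (integrable_abs_mul_max_zero hf hFm hfF)
  have hgG : ∀ (s t : T) x, |g s x - g t x| ≤ N (s - t) * G x := fun s t x =>
    abs_mul_div_sub_mul_div_le (hp0 x) (apply_nonneg N _) (hlip s s.2 t t.2 x)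
  have hA : ∀ n ω, BddBelow (Set.range fun t => sampleMean n (g t) ω) := fun n ω =>
    bddBelow_range_of_net hρ (fun s t => abs_sampleMean_sub_le (hgG s t) n ω) (S j₁) hj₁
  have hB : BddBelow (Set.range fun t : T => ∫ x, f x ∂(Pt t)) := by
    refine bddBelow_range_of_net hρ (L := ∫ x, G x ∂P) (fun s t => ?_) (S j₁) hj₁
    rw [← hgP, ← hgP]
    exact abs_integral_sub_integral_le (hgi s) (hgi t) hGi (hgG s t)
  refine ⟨fun n ω => ((|(⨅ t, sampleMean n (g t) ω) - ⨅ t : T, ∫ x, f x ∂(Pt t)| : ℝ) : EReal),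
    fun n => isMinMeasCover_of_eq ?_ fun ω => ?_, ?_⟩
  · exact measurable_coe_real_ereal.comp
      ((measurable_iInf_sampleMean hρ S hS hg hgG n).sub_const _).abs
  · exact eabs_iInf_coe_sub_iInf_coe_s15 (hA n ω) hB
  · filter_upwards [ae_tendsto_iInf_sampleMean hmap hind hρ S hS hg hgi hG hGi hgG] with ω hω
    simp only [hgP] at hω
    rw [← EReal.coe_zero]
    exact EReal.tendsto_coe.2 (by simpa using (hω.sub_const (⨅ t : T, ∫ x, f x ∂(Pt t))).abs)

/-- **Importance sampling, Lipschitz densities.** In the importance-sampling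
setting, if the index set `T ⊆ ℝ^m` (with a norm `‖·‖`) is bounded and there is a Borel
measurable `F : ℝ → ℝ` with `∫ |f| F dx < +∞` such that
`|p_s(x) − p_t(x)| ≤ ‖s − t‖·F(x)` for all `s, t ∈ T`, `x ∈ ℝ`, then the importance-sampling
estimator `Ê̲_n^{𝒫/P}(f)` is a strongly consistent estimator of `E̲^𝒫(f)`. -/
theorem importance_sampling_lipschitz_consistency
    {m : ℕ} (N : Seminorm ℝ (Fin m → ℝ)) (hN : ∀ v, N v = 0 → v = 0)
    (T : Set (Fin m → ℝ)) (hTne : T.Nonempty)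
    (hTbdd : ∃ R : ℝ, ∀ t ∈ T, N t ≤ R)
    -- the central probability measure `P`, with density `p`
    (p : ℝ → ℝ) (hpm : Measurable p) (hp0 : ∀ x, 0 ≤ p x)
    (P : Measure ℝ) (hP : P = volume.withDensity (fun x => ENNReal.ofReal (p x)))
    [IsProbabilityMeasure P]
    -- the densities `p_t` of the measures `P_t`, `t ∈ T`
    (pt : (Fin m → ℝ) → ℝ → ℝ)
    (hptm : ∀ t ∈ T, Measurable (pt t)) (hpt0 : ∀ t ∈ T, ∀ x, 0 ≤ pt t x)
    (Pt : (Fin m → ℝ) → Measure ℝ)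
    (hPt : ∀ t ∈ T, Pt t = volume.withDensity (fun x => ENNReal.ofReal (pt t x)))
    (hPtprob : ∀ t ∈ T, IsProbabilityMeasure (Pt t))
    (hsupp : ∀ t ∈ T, ∀ x, pt t x ≠ 0 → p x ≠ 0)
    (f : ℝ → ℝ) (hf : Measurable f)
    (hfint : ∀ t ∈ T, Integrable f (Pt t))
    (hsup : BddAbove ((fun t => ∫ x, |f x| ∂(Pt t)) '' T))
    (F : ℝ → ℝ) (hFm : Measurable F)
    (hfF : ∫⁻ x, ENNReal.ofReal (|f x| * F x) ≠ ⊤)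
    (hlip : ∀ s ∈ T, ∀ t ∈ T, ∀ x : ℝ, |pt s x - pt t x| ≤ N (s - t) * F x)
    (μ : Measure (ℕ → ℝ)) [IsProbabilityMeasure μ]
    (hmap : ∀ k : ℕ, μ.map (fun ω => ω k) = P)
    (hind : iIndepFun (m := fun _ : ℕ => (inferInstance : MeasurableSpace ℝ))
      (fun k (ω : ℕ → ℝ) => ω k) μ) :
    ∃ H : ℕ → (ℕ → ℝ) → EReal,
      (∀ n : ℕ, IsMinMeasCover μ
        (fun ω => eabs ((⨅ t : T, (((n : ℝ)⁻¹ *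
            ∑ k ∈ Finset.range n, f (ω k) * pt t (ω k) / p (ω k) : ℝ) : EReal)) -
          ⨅ t : T, ((∫ x, f x ∂(Pt t) : ℝ) : EReal))) (H n)) ∧
      ∀ᵐ ω ∂μ, Tendsto (fun n : ℕ => H n ω) atTop (𝓝 (0 : EReal)) :=
  importance_sampling_lipschitz_consistency_general N hN T hTne hTbdd p hpm hp0 P hP pt hptm hpt0 Pt
    hPt hsupp f hf hfint F hFm hfF hlip μ hmap hind
end
end
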